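/- For every finite abelian group A, the order of its automorphism group is at least φ(|A|), where φ is the Euler totient function. -/

import Mathlib

section Aux

/-- Shear automorphism of a product. -/
private def shearAut {C B : Type*} [AddCommGroup C] [AddCommGroup B] (f : C →+ B) :
    (C × B) ≃+ (C × B) where
  toFun p := (p.1, p.2 + f p.1)
  invFun p := (p.1, p.2 - f p.1)
  left_inv p := by simp
  right_inv p := by simp
  map_add' p q := by ext <;> simp [map_add] <;> abel

private lemma finite_addAut (M : Type*) [AddCommGroup M] [Finite M] : Finite (AddAut M) :=
  Finite.of_injective (fun f : AddAut M => (f : M → M)) fun f g h => by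
    ext x; exact congrFun h x

private lemma aut_prod_lb (C B : Type*) [AddCommGroup C] [AddCommGroup B] [Finite C] [Finite B] :
    Nat.card (AddAut C) * Nat.card (AddAut B) * Nat.card (C →+ B) ≤ Nat.card (AddAut (C × B)) := by
  have hfin : Finite (AddAut (C × B)) := finite_addAut _
  rw [← Nat.card_prod, ← Nat.card_prod]
  apply Nat.card_le_card_of_injective
    (f := fun x : (AddAut C × AddAut B) × (C →+ B) =>
      ((AddEquiv.prodCongr (x.1.1 : C ≃+ C) (x.1.2 : B ≃+ B)).trans (shearAut x.2) : AddAut (C × B)))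
  rintro ⟨⟨σ, τ⟩, f⟩ ⟨⟨σ', τ'⟩, f'⟩ h
  have hx : ∀ x : C, (σ x, f (σ x)) = (σ' x, f' (σ' x)) := by
    intro x
    have := DFunLike.congr_fun h (x, (0 : B))
    simpa [shearAut, AddEquiv.prodCongr] using this
  have hy : ∀ y : B, τ y = τ' y := by
    intro y
    have := DFunLike.congr_fun h ((0 : C), y)
    simpa [shearAut, AddEquiv.prodCongr] using this
  have hσ : σ = σ' := by ext x; exact (Prod.mk.injEq _ _ _ _).mp (hx x) |>.1
  have hf : f = f' := by
    ext c
    obtain ⟨x, rfl⟩ := σ.surjective c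
    have := (Prod.mk.injEq _ _ _ _).mp (hx x)
    rw [this.2, ← hσ, this.1]
  simp only [Prod.mk.injEq]
  exact ⟨⟨hσ, by ext y; exact hy y⟩, hf⟩

private lemma gcd_le_card_hom (c m : ℕ) (hc : 0 < c) (hm : 0 < m) :
    Nat.gcd c m ≤ Nat.card (ZMod c →+ ZMod m) := by
  have : NeZero c := ⟨hc.ne'⟩
  have : NeZero m := ⟨hm.ne'⟩
  set g := Nat.gcd c m with hg
  have hgm : g ∣ m := Nat.gcd_dvd_right c m
  have hgpos : 0 < g := Nat.gcd_pos_of_pos_left m hc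
  have : NeZero g := ⟨hgpos.ne'⟩
  have hι0 : ((g : ℤ) • (((m / g : ℕ) : ZMod m))) = 0 := by
    rw [zsmul_eq_mul]
    push_cast
    rw [← Nat.cast_mul, Nat.mul_div_cancel' hgm, ZMod.natCast_self]
  let ι : ZMod g →+ ZMod m := ZMod.lift g ⟨zmultiplesHom _ (((m / g : ℕ) : ZMod m)), hι0⟩
  have hιval : ∀ a : ZMod g, ι a = ((a.val * (m / g) : ℕ) : ZMod m) := by
    intro a
    conv_lhs => rw [← ZMod.natCast_rightInverse a]
    rw [show ((a.val : ℕ) : ZMod g) = ((a.val : ℤ) : ZMod g) by push_cast; rfl]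
    rw [ZMod.lift_coe]
    show (a.val : ℤ) • (((m / g : ℕ) : ZMod m)) = _
    rw [zsmul_eq_mul]
    push_cast
    ring
  have hι : Function.Injective ι := by
    rw [injective_iff_map_eq_zero]
    intro a ha
    rw [hιval a, ZMod.natCast_eq_zero_iff] at ha
    have hlt : a.val * (m / g) < m := by
      calc a.val * (m / g) < g * (m / g) := by
            apply Nat.mul_lt_mul_of_lt_of_le (ZMod.val_lt a) le_rfl
            exact Nat.div_pos (Nat.le_of_dvd hm hgm) hgpos
        _ = m := Nat.mul_div_cancel' hgm
    have h0 : a.val = 0 := by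
      rcases Nat.mul_eq_zero.mp (Nat.eq_zero_of_dvd_of_lt ha hlt) with h | h
      · exact h
      · exact absurd h (Nat.div_pos (Nat.le_of_dvd hm hgm) hgpos).ne'
    have := ZMod.natCast_rightInverse (n := g) a
    rw [h0] at this
    simpa using this.symm
  have : Finite (ZMod c →+ ZMod m) := DFunLike.finite _
  calc g = Nat.card (ZMod g) := (Nat.card_zmod g).symm
    _ ≤ Nat.card (ZMod c →+ ZMod m) := by
        apply Nat.card_le_card_of_injective
          (f := fun a : ZMod g => ι.comp ((AddMonoidHom.mulLeft a).comp
            ((ZMod.castHom (Nat.gcd_dvd_left c m) (ZMod g)).toAddMonoidHom)))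
        intro a a' hF
        apply hι
        have := DFunLike.congr_fun hF (1 : ZMod c)
        simpa [ZMod.cast_one (Nat.gcd_dvd_left c m)] using this

/-- Dependent `Fin.cons` additive equivalence. -/
private def piSuccAddEquiv {k : ℕ} (M : Fin (k + 1) → Type*) [∀ i, AddCommGroup (M i)] :
    (∀ i, M i) ≃+ M 0 × ∀ i : Fin k, M i.succ where
  toFun f := (f 0, fun i => f i.succ)
  invFun p := Fin.cons p.1 p.2
  left_inv f := Fin.cons_self_tail f
  right_inv p := by ext <;> simp
  map_add' f g := rfl

private def homProdEquiv (M N P : Type*) [AddCommGroup M] [AddCommGroup N] [AddCommGroup P] :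
    (M →+ N × P) ≃ (M →+ N) × (M →+ P) where
  toFun f := ((AddMonoidHom.fst N P).comp f, (AddMonoidHom.snd N P).comp f)
  invFun p := p.1.prod p.2
  left_inv f := by ext x <;> rfl
  right_inv p := by ext x <;> rfl

private lemma homcard_pi (c : ℕ) (hc : 0 < c) :
    ∀ (k : ℕ) (n : Fin k → ℕ), (∀ i, 0 < n i) →
      Nat.gcd c (∏ i, n i) ≤ Nat.card (ZMod c →+ ∀ i, ZMod (n i)) := by
  have : NeZero c := ⟨hc.ne'⟩
  intro k
  induction k with
  | zero =>
      intro n _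
      simp only [Finset.univ_eq_empty, Finset.prod_empty, Nat.gcd_one_right]
      have : Finite (ZMod c →+ ∀ i : Fin 0, ZMod (n i)) := DFunLike.finite _
      exact Nat.one_le_iff_ne_zero.mpr Nat.card_pos.ne'
  | succ k ih =>
      intro n hn
      haveI : ∀ i : Fin (k + 1), NeZero (n i) := fun i => ⟨(hn i).ne'⟩
      haveI hfin : ∀ i : Fin k, Finite (ZMod (n i.succ)) := fun i => inferInstance
      haveI : Finite (∀ i : Fin k, ZMod (n i.succ)) := Pi.finite
      have hb : 0 < ∏ i : Fin k, n i.succ := Finset.prod_pos fun i _ => hn i.succ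
      have e1 : (ZMod c →+ ∀ i : Fin (k + 1), ZMod (n i)) ≃
          (ZMod c →+ ZMod (n 0) × ∀ i : Fin k, ZMod (n i.succ)) :=
        (AddEquiv.addMonoidHomCongrRightEquiv (M := ZMod c)
          (piSuccAddEquiv fun i => ZMod (n i)))
      rw [Fin.prod_univ_succ, Nat.card_congr e1, Nat.card_congr (homProdEquiv _ _ _)]
      have hfin1 : Finite (ZMod c →+ ZMod (n 0)) := DFunLike.finite _
      have hfin2 : Finite (ZMod c →+ ∀ i : Fin k, ZMod (n i.succ)) := DFunLike.finite _
      rw [Nat.card_prod]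
      calc Nat.gcd c (n 0 * ∏ i : Fin k, n i.succ)
          ≤ Nat.gcd c (n 0) * Nat.gcd c (∏ i : Fin k, n i.succ) := by
            apply Nat.le_of_dvd
            · exact Nat.mul_pos (Nat.gcd_pos_of_pos_left _ hc) (Nat.gcd_pos_of_pos_left _ hc)
            · exact gcd_mul_dvd_mul_gcd c (n 0) _
        _ ≤ Nat.card (ZMod c →+ ZMod (n 0)) *
              Nat.card (ZMod c →+ ∀ i : Fin k, ZMod (n i.succ)) :=
            Nat.mul_le_mul (gcd_le_card_hom c (n 0) hc (hn 0)) (ih _ fun i => hn i.succ)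

private lemma aut_zmod (n : ℕ) (hn : 0 < n) : Nat.totient n ≤ Nat.card (AddAut (ZMod n)) := by
  haveI : NeZero n := ⟨hn.ne'⟩
  rw [Nat.card_congr (ZMod.AddAutEquivUnits n).toEquiv, Nat.card_eq_fintype_card]
  rw [Fintype.card_congr (Additive.toMul (α := (ZMod n)ˣ)), ZMod.card_units_eq_totient]

private lemma main_aux :
    ∀ (k : ℕ) (n : Fin k → ℕ), (∀ i, 0 < n i) →
      Nat.totient (∏ i, n i) ≤ Nat.card (AddAut (∀ i, ZMod (n i))) := by
  intro k
  induction k with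
  | zero =>
      intro n _
      simp only [Finset.univ_eq_empty, Finset.prod_empty, Nat.totient_one]
      haveI : Finite (AddAut (∀ i : Fin 0, ZMod (n i))) := finite_addAut _
      exact Nat.one_le_iff_ne_zero.mpr Nat.card_pos.ne'
  | succ k ih =>
      intro n hn
      haveI : ∀ i : Fin (k + 1), NeZero (n i) := fun i => ⟨(hn i).ne'⟩
      haveI hfin : ∀ i : Fin k, Finite (ZMod (n i.succ)) := fun i => inferInstance
      haveI : Finite (∀ i : Fin k, ZMod (n i.succ)) := Pi.finite
      set c := n 0
      set b := ∏ i : Fin k, n i.succ with hbdef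
      have hc : 0 < c := hn 0
      have hb : 0 < b := Finset.prod_pos fun i _ => hn i.succ
      have hgcd : 0 < Nat.gcd c b := Nat.gcd_pos_of_pos_left _ hc
      rw [Fin.prod_univ_succ]
      have key : Nat.totient (c * b) ≤ Nat.totient c * Nat.totient b * Nat.gcd c b := by
        calc Nat.totient (c * b) ≤ Nat.totient (Nat.gcd c b) * Nat.totient (c * b) :=
              Nat.le_mul_of_pos_left _ (Nat.totient_pos.mpr hgcd)
          _ = Nat.totient c * Nat.totient b * Nat.gcd c b :=
              Nat.totient_gcd_mul_totient_mul c b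
      refine key.trans ?_
      have step : Nat.totient c * Nat.totient b * Nat.gcd c b ≤
          Nat.card (AddAut (ZMod c)) * Nat.card (AddAut (∀ i : Fin k, ZMod (n i.succ))) *
            Nat.card (ZMod c →+ ∀ i : Fin k, ZMod (n i.succ)) := by
        apply Nat.mul_le_mul
        apply Nat.mul_le_mul (aut_zmod c hc) (ih _ fun i => hn i.succ)
        exact homcard_pi c hc k (fun i => n i.succ) fun i => hn i.succ
      refine step.trans ?_
      refine (aut_prod_lb (ZMod c) (∀ i : Fin k, ZMod (n i.succ))).trans ?_
      rw [Nat.card_congr (AddAut.congr (piSuccAddEquiv fun i => ZMod (n i)).symm).toEquiv]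

end Aux

/-- For every finite abelian group `A`, `|Aut(A)| ≥ φ(|A|)`. -/
theorem card_aut_ge_totient_of_comm (A : Type*) [CommGroup A] [Finite A] :
    Nat.totient (Nat.card A) ≤ Nat.card (MulAut A) := by
  classical
  obtain ⟨ι, hι, n, h1, ⟨e⟩⟩ := AddCommGroup.equiv_directSum_zmod_of_finite' (Additive A)
  let e' : Additive A ≃+ ∀ i, ZMod (n i) := e.trans (DirectSum.addEquivProd _)
  let eq := Fintype.equivFin ι
  let pe : (∀ i, ZMod (n i)) ≃+ ∀ j : Fin (Fintype.card ι), ZMod (n (eq.symm j)) :=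
    { Equiv.piCongrLeft' (fun i => ZMod (n i)) eq with map_add' := fun f g => rfl }
  have hcard : Nat.card A = ∏ j : Fin (Fintype.card ι), n (eq.symm j) := by
    rw [Nat.card_congr ((Additive.ofMul (α := A)).trans (e'.trans pe).toEquiv)]
    rw [Nat.card_pi]
    simp [Nat.card_zmod]
  have hmulaut : Nat.card (MulAut A) = Nat.card (AddAut (Additive A)) :=
    Nat.card_congr MulEquiv.toAdditive
  rw [hcard, hmulaut,
    Nat.card_congr (AddAut.congr (e'.trans pe)).toEquiv]
  exact main_aux _ _ fun j => Nat.lt_of_lt_of_le Nat.zero_lt_one (h1 (eq.symm j)).le
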